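/- arXiv:1211.5326 — 7 statements merged into one kernel-verified Lean document; each statement's English description precedes it below -/
import Mathlib

section
/- There exists a non-trivial (non-monochromatic) coloring φ of the complete graph K_n that is a constant 2-labelling for some constants a, b if and only if all vertices other than v have equal weight, i.e. w(u₁) = w(u₂) for all u₁, u₂ ∈ Fin n with u₁ ≠ v and u₂ ≠ v. -/
/-!
If `φ` is non-monochromatic, pick `σ` sending `u₁, u₂ ≠ v` to a black and a white vertex. Then `σ`
and `σ * swap u₁ u₂` agree at `v`, so their black weights coincide; but they differ exactly by
`w u₁ - w u₂`. Conversely, when all vertices other than `v` weigh the same, colouring only `v` black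
works: the black weight of `φ ∘ σ` is `w (σ⁻¹ v)`, which is `w v` if `σ` fixes `v` and the common
weight otherwise.
-/

open Equiv Finset

variable {α : Type*}

theorem exists_perm_apply_eq_apply_eq [DecidableEq α] {u₁ u₂ p q : α} (hu : u₁ ≠ u₂)
    (hpq : p ≠ q) : ∃ σ : Perm α, σ u₁ = p ∧ σ u₂ = q := by
  have hu₂ : swap u₁ p u₂ ≠ p := fun h =>
    hu ((swap u₁ p).injective (h.trans (swap_apply_left u₁ p).symm)).symm
  refine ⟨swap (swap u₁ p u₂) q * swap u₁ p, ?_, swap_apply_left _ _⟩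
  rw [Perm.mul_apply, swap_apply_left, swap_apply_of_ne_of_ne hu₂.symm hpq]

variable [Fintype α]

def blackWeight (w : α → ℝ) (c : α → Bool) : ℝ :=
  ∑ u, if c u = true then w u else 0

def IsConstantTwoLabelling (v : α) (w : α → ℝ) (φ : α → Bool) (a b : ℝ) : Prop :=
  ∀ σ : Perm α,
    (φ (σ v) = true → blackWeight w (φ ∘ σ) = a) ∧
    (φ (σ v) = false → blackWeight w (φ ∘ σ) = b)

section

variable {v : α} {w : α → ℝ} {φ : α → Bool} {a b : ℝ}

theorem IsConstantTwoLabelling.blackWeight_eq (h : IsConstantTwoLabelling v w φ a b)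
    {σ τ : Perm α} (hστ : φ (σ v) = φ (τ v)) :
    blackWeight w (φ ∘ σ) = blackWeight w (φ ∘ τ) := by
  cases hσ : φ (σ v)
  · rw [(h σ).2 hσ, (h τ).2 (hστ ▸ hσ)]
  · rw [(h σ).1 hσ, (h τ).1 (hστ ▸ hσ)]

variable [DecidableEq α]

theorem blackWeight_comp_swap_add {c : α → Bool} {u₁ u₂ : α} (h₁ : c u₁ = true)
    (h₂ : c u₂ = false) :
    blackWeight w (c ∘ swap u₁ u₂) + w u₁ = blackWeight w c + w u₂ := by
  have hne : u₁ ≠ u₂ := ne_of_apply_ne c (by simp [h₁, h₂])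
  have houtside : ∑ u ∈ {u₁, u₂}ᶜ, (if (c ∘ swap u₁ u₂) u = true then w u else 0) =
      ∑ u ∈ {u₁, u₂}ᶜ, (if c u = true then w u else 0) := by
    refine sum_congr rfl fun u hu => ?_
    simp only [mem_compl, mem_insert, mem_singleton, not_or] at hu
    rw [Function.comp_apply, swap_apply_of_ne_of_ne hu.1 hu.2]
  unfold blackWeight
  rw [← sum_add_sum_compl {u₁, u₂}, ← sum_add_sum_compl {u₁, u₂} (fun u => ite _ _ _),
    houtside, sum_pair hne, sum_pair hne]
  simp [h₁, h₂]
  ring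

theorem blackWeight_decide_eq (x : α) :
    blackWeight w (fun u => decide (u = x)) = w x := by
  simp [blackWeight]

theorem IsConstantTwoLabelling.weight_eq (h : IsConstantTwoLabelling v w φ a b)
    (hφ : ∃ p q, φ p ≠ φ q) {u₁ u₂ : α} (h₁ : u₁ ≠ v) (h₂ : u₂ ≠ v) : w u₁ = w u₂ := by
  rcases eq_or_ne u₁ u₂ with rfl | hu
  · rfl
  obtain ⟨p, q, hp, hq⟩ : ∃ p q, φ p = true ∧ φ q = false := by
    obtain ⟨p, q, hpq⟩ := hφ
    cases hp : φ p
    · exact ⟨q, p, by simpa [hp] using hpq.symm, hp⟩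
    · exact ⟨p, q, hp, by simpa [hp] using hpq.symm⟩
  obtain ⟨σ, hσ₁, hσ₂⟩ := exists_perm_apply_eq_apply_eq hu
    (show p ≠ q by rintro rfl; simp [hp] at hq)
  have hfix : (σ * swap u₁ u₂) v = σ v := by
    rw [Perm.mul_apply, swap_apply_of_ne_of_ne h₁.symm h₂.symm]
  have hswap := blackWeight_comp_swap_add (w := w) (c := φ ∘ σ) (u₁ := u₁) (u₂ := u₂)
    (by simpa [hσ₁] using hp) (by simpa [hσ₂] using hq)
  have hsame := h.blackWeight_eq (congrArg φ hfix)
  rw [Perm.coe_mul, ← Function.comp_assoc] at hsame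
  linarith

theorem isConstantTwoLabelling_decide_eq {u₀ : α}
    (hw : ∀ u₁ u₂, u₁ ≠ v → u₂ ≠ v → w u₁ = w u₂) (hu₀ : u₀ ≠ v) :
    IsConstantTwoLabelling v w (fun u => decide (u = v)) (w v) (w u₀) := by
  intro σ
  have hweight : blackWeight w ((fun u => decide (u = v)) ∘ σ) = w (σ.symm v) := by
    simp only [Function.comp_def, ← eq_symm_apply]
    exact blackWeight_decide_eq _
  rw [hweight]
  refine ⟨fun hv => ?_, fun hv => hw _ _ ?_ hu₀⟩
  · rw [(symm_apply_eq σ).mpr (of_decide_eq_true hv).symm]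
  · exact fun hfix => of_decide_eq_false hv ((symm_apply_eq σ).mp hfix).symm

end

/-- The complete graph `K_n` (whose automorphisms are all permutations of `Fin n`)
admits a non-trivial (non-monochromatic) constant 2-labelling for some constants
`a`, `b` iff all vertices other than `v` have equal weight. -/
theorem completeGraph_nontrivial_constant2Labelling_iff
    (n : ℕ) (hn : 2 ≤ n) (v : Fin n) (w : Fin n → ℝ) :
    (∃ (φ : Fin n → Bool) (a b : ℝ),
        (∃ u₁ u₂ : Fin n, φ u₁ ≠ φ u₂) ∧
        ∀ σ : Equiv.Perm (Fin n),
          (φ (σ v) = true →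
            (∑ u : Fin n, if φ (σ u) = true then w u else 0) = a) ∧
          (φ (σ v) = false →
            (∑ u : Fin n, if φ (σ u) = true then w u else 0) = b)) ↔
      ∀ u₁ u₂ : Fin n, u₁ ≠ v → u₂ ≠ v → w u₁ = w u₂ := by
  constructor
  · rintro ⟨φ, a, b, hφ, h⟩ u₁ u₂
    exact IsConstantTwoLabelling.weight_eq h hφ
  · intro hw
    have : Nontrivial (Fin n) := Fin.nontrivial_iff_two_le.mpr hn
    obtain ⟨u₀, hu₀⟩ := exists_ne v
    exact ⟨fun u => decide (u = v), w v, w u₀, ⟨v, u₀, by simpa using hu₀⟩,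
      isConstantTwoLabelling_decide_eq hw hu₀⟩
end

section
/- If φ is a non-monochromatic coloring of a Type 2 cycle that is a constant 2-labelling with constants a and b, then either (i) φ is (p/2)-periodic and there exists a natural number α with 0 ≤ α ≤ (p−4)/2 such that a = 2αx + t + z and b = 2(α+1)x, or (ii) φ is (p/2)-antiperiodic, a = (p/2−1)x + z and b = (p/2−1)x + t. -/
/-!
Write `h = p/2` and `N` for the number of black vertices. As `w` equals `x` away from `0` and `h`,
`S_φ(k) = N x + [φ k = black] (z - x) + [φ (k + h) = black] (t - x)`. Vertices of the same colour
have the same sum, so, as `t ≠ x`, the colour of `k + h` is a function of the colour of `k`; since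
`h + h = 0`, `φ` is then `h`-periodic or `h`-antiperiodic. Translation by `h` swaps the two
colour classes in the antiperiodic case, so `N = p/2`, and pairs up the black vertices in the
periodic case, so `N` is even with `0 < N < p`. Evaluating `S_φ` at a black and at a white vertex
gives `a` and `b`.
-/

open Finset Function

theorem exists_eq_true_and_eq_false {α : Type*} {φ : α → Bool} (hφ : ∃ i j, φ i ≠ φ j) :
    ∃ i j, φ i = true ∧ φ j = false := by
  obtain ⟨i, j, hij⟩ := hφ
  cases hci : φ i
  · exact ⟨j, i, by simpa [hci] using hij.symm, hci⟩
  · exact ⟨i, j, hci, by simpa [hci] using hij.symm⟩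

section Labelling

variable {G R : Type*} [AddCommGroup G] [Fintype G] [CommRing R]

def labelSum (w : G → R) (φ : G → Bool) (k : G) : R :=
  ∑ u, if φ (u + k) = true then w u else 0

def IsConstLabelling (w : G → R) (φ : G → Bool) (a b : R) : Prop :=
  ∀ k, (φ k = true → labelSum w φ k = a) ∧ (φ k = false → labelSum w φ k = b)

variable {w : G → R} {h : G} {x : R}

theorem labelSum_eq_card_mul_add (hh : h ≠ 0) (hw : ∀ u, u ≠ 0 → u ≠ h → w u = x)
    (φ : G → Bool) (k : G) :
    labelSum w φ k = #{v | φ v = true} * x + (if φ k = true then w 0 - x else 0)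
      + (if φ (k + h) = true then w h - x else 0) := by
  have hsplit : ∀ u, (if φ (u + k) = true then w u else 0)
      = (if φ (u + k) = true then x else 0) + (if φ (u + k) = true then w u - x else 0) := by
    intro u; split_ifs <;> ring
  have hconst : ∑ u, (if φ (u + k) = true then x else 0) = #{v | φ v = true} * x := by
    rw [Fintype.sum_equiv (Equiv.addRight k) (fun u => if φ (u + k) = true then x else 0)
      (fun v => if φ v = true then x else 0) fun _ => rfl, ← sum_filter, sum_const, nsmul_eq_mul]
  have hdefect : ∑ u, (if φ (u + k) = true then w u - x else 0)
      = (if φ k = true then w 0 - x else 0) + (if φ (k + h) = true then w h - x else 0) := by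
    rw [Fintype.sum_eq_add 0 h hh.symm fun u ⟨hu0, huh⟩ => by simp [hw u hu0 huh], zero_add,
      add_comm h k]
  rw [labelSum, sum_congr rfl fun u _ => hsplit u, sum_add_distrib, hconst, hdefect, add_assoc]

theorem IsConstLabelling.apply_add_eq_of_apply_eq {φ : G → Bool} {a b : R}
    (hlab : IsConstLabelling w φ a b) (hh : h ≠ 0) (hw : ∀ u, u ≠ 0 → u ≠ h → w u = x)
    (hwh : w h ≠ x) {k₁ k₂ : G} (hk : φ k₁ = φ k₂) : φ (k₁ + h) = φ (k₂ + h) := by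
  have hsum : labelSum w φ k₁ = labelSum w φ k₂ := by
    cases hc : φ k₂
    · rw [(hlab k₁).2 (hk.trans hc), (hlab k₂).2 hc]
    · rw [(hlab k₁).1 (hk.trans hc), (hlab k₂).1 hc]
  simp only [labelSum_eq_card_mul_add hh hw, hk, add_right_inj] at hsum
  have hc : w h - x ≠ 0 := sub_ne_zero.mpr hwh
  cases h₁ : φ (k₁ + h) <;> cases h₂ : φ (k₂ + h) <;> simp_all

theorem IsConstLabelling.eq_of_periodic {φ : G → Bool} {a b : R}
    (hlab : IsConstLabelling w φ a b) (hh : h ≠ 0) (hw : ∀ u, u ≠ 0 → u ≠ h → w u = x)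
    (hper : Periodic φ h) {i j : G} (hi : φ i = true) (hj : φ j = false) :
    a = #{v | φ v = true} * x + (w 0 - x) + (w h - x) ∧ b = #{v | φ v = true} * x := by
  rw [← (hlab i).1 hi, ← (hlab j).2 hj]
  simp [labelSum_eq_card_mul_add hh hw, hper _, hi, hj]

theorem IsConstLabelling.eq_of_antiperiodic {φ : G → Bool} {a b : R}
    (hlab : IsConstLabelling w φ a b) (hh : h ≠ 0) (hw : ∀ u, u ≠ 0 → u ≠ h → w u = x)
    (hanti : ∀ i, φ (i + h) ≠ φ i) {i j : G} (hi : φ i = true) (hj : φ j = false) :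
    a = #{v | φ v = true} * x + (w 0 - x) ∧ b = #{v | φ v = true} * x + (w h - x) := by
  rw [← (hlab i).1 hi, ← (hlab j).2 hj]
  simp [labelSum_eq_card_mul_add hh hw, Bool.eq_not_of_ne (hanti _), hi, hj]

end Labelling

section Colouring

variable {G : Type*} [AddGroup G] {φ : G → Bool} {h : G}

theorem periodic_or_antiperiodic_of_apply_add_eq (h2 : h + h = 0)
    (hφ : ∀ k₁ k₂, φ k₁ = φ k₂ → φ (k₁ + h) = φ (k₂ + h)) :
    Periodic φ h ∨ ∀ i, φ (i + h) ≠ φ i := by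
  refine or_iff_not_imp_left.2 fun hnper j => ?_
  obtain ⟨i, hi⟩ : ∃ i, φ (i + h) ≠ φ i := by simpa [Periodic] using hnper
  by_cases hj : φ j = φ i
  · rwa [hφ j i hj, hj]
  · have hji : φ j = φ (i + h) := by
      revert hi hj; cases φ j <;> cases φ i <;> cases φ (i + h) <;> simp
    rw [hφ j (i + h) hji, add_assoc, h2, add_zero, hji]
    exact hi.symm

theorem even_card_of_add_mem [DecidableEq G] (hh : h ≠ 0) (h2 : h + h = 0) (s : Finset G)
    (hs : ∀ v ∈ s, v + h ∈ s) : Even #s := by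
  induction s using Finset.strongInduction with
  | H s ih =>
  rcases s.eq_empty_or_nonempty with rfl | ⟨v, hv⟩
  · exact Even.zero
  have hvh : v + h ∈ s.erase v := mem_erase.2 ⟨by simpa using hh, hs v hv⟩
  have hpair : #s = #((s.erase v).erase (v + h)) + 2 := by
    rw [← card_erase_add_one hv, ← card_erase_add_one hvh, add_assoc]
  rw [hpair]
  refine (ih _ ?_ ?_).add even_two
  · exact (erase_ssubset hvh).trans (erase_ssubset hv)
  · intro u hu
    simp only [mem_erase] at hu ⊢
    refine ⟨fun e => hu.2.1 (add_right_cancel e), fun e => hu.1 ?_, hs u hu.2.2⟩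
    rw [← e, add_assoc, h2, add_zero]

variable [Fintype G]

theorem two_mul_card_filter_of_antiperiodic (h2 : h + h = 0) (hanti : ∀ i, φ (i + h) ≠ φ i) :
    2 * #{v | φ v = true} = Fintype.card G := by
  have hflip : #{v | φ v = true} = #{v | ¬φ v = true} := by
    refine card_nbij' (· + h) (· + h) ?_ ?_ ?_ ?_ <;> intro v <;>
      simp [add_assoc, h2, Bool.eq_not_of_ne (hanti v)]
  rw [two_mul]
  nth_rw 2 [hflip]
  rw [card_filter_add_card_filter_not, card_univ]

end Colouring

theorem ZMod.natCast_div_two_add_self {p : ℕ} (hp : Even p) :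
    ((p / 2 : ℕ) : ZMod p) + ((p / 2 : ℕ) : ZMod p) = 0 := by
  rw [← Nat.cast_add, ← two_mul, Nat.two_mul_div_two_of_even hp, ZMod.natCast_self]

theorem ZMod.natCast_div_two_ne_zero {p : ℕ} (hp : 2 ≤ p) : ((p / 2 : ℕ) : ZMod p) ≠ 0 := by
  rw [Ne, ZMod.natCast_eq_zero_iff]
  intro hdvd
  have := Nat.le_of_dvd (by omega) hdvd
  omega

theorem type2_constant2Labelling_general
    (p : ℕ) [NeZero p] (hpe : Even p)
    (w : ZMod p → ℝ) (z x t : ℝ) (hxt : x ≠ t)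
    (hw0 : w 0 = z) (hwt : w ((p / 2 : ℕ) : ZMod p) = t)
    (hw : ∀ i : ZMod p, i ≠ 0 → i ≠ ((p / 2 : ℕ) : ZMod p) → w i = x)
    (φ : ZMod p → Bool) (hnontriv : ∃ i j : ZMod p, φ i ≠ φ j)
    (a b : ℝ)
    (hlab : ∀ k : ZMod p,
      (φ k = true → (∑ u : ZMod p, if φ (u + k) = true then w u else 0) = a) ∧
      (φ k = false → (∑ u : ZMod p, if φ (u + k) = true then w u else 0) = b)) :
    ((∀ i : ZMod p, φ (i + ((p / 2 : ℕ) : ZMod p)) = φ i) ∧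
      ∃ α : ℕ, α ≤ (p - 4) / 2 ∧
        a = 2 * (α : ℝ) * x + t + z ∧ b = 2 * ((α : ℝ) + 1) * x) ∨
    ((∀ i : ZMod p, φ (i + ((p / 2 : ℕ) : ZMod p)) ≠ φ i) ∧
      a = (((p / 2 : ℕ) : ℝ) - 1) * x + z ∧
      b = (((p / 2 : ℕ) : ℝ) - 1) * x + t) := by
  have hlab : IsConstLabelling w φ a b := hlab
  set h : ZMod p := ((p / 2 : ℕ) : ZMod p)
  have h2 : h + h = 0 := ZMod.natCast_div_two_add_self hpe
  obtain ⟨r, hr⟩ := hpe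
  have hh : h ≠ 0 := ZMod.natCast_div_two_ne_zero (by have := NeZero.ne p; omega)
  obtain ⟨i, j, hi, hj⟩ := exists_eq_true_and_eq_false hnontriv
  have hNp : #{v | φ v = true} < p := by
    simpa using card_lt_card (filter_ssubset.2 ⟨j, mem_univ j, by simp [hj]⟩)
  have hN0 : 0 < #{v | φ v = true} := card_pos.2 ⟨i, by simp [hi]⟩
  rcases periodic_or_antiperiodic_of_apply_add_eq h2
    fun _ _ hk => hlab.apply_add_eq_of_apply_eq hh hw (hwt ▸ hxt.symm) hk with hper | hanti
  · obtain ⟨m, hm⟩ : Even #{v | φ v = true} :=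
      even_card_of_add_mem hh h2 _ fun v hv => by simpa [hper v] using hv
    obtain ⟨ha, hb⟩ := hlab.eq_of_periodic hh hw hper hi hj
    refine .inl ⟨hper, m - 1, by omega, ?_, ?_⟩
    · rw [ha, hw0, hwt, hm]
      push_cast [show 1 ≤ m by omega]
      ring
    · rw [hb, hm]
      push_cast [show 1 ≤ m by omega]
      ring
  · have hN : p / 2 = #{v | φ v = true} := by
      have := two_mul_card_filter_of_antiperiodic h2 hanti
      rw [ZMod.card] at this
      omega
    obtain ⟨ha, hb⟩ := hlab.eq_of_antiperiodic hh hw hanti hi hj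
    refine .inr ⟨hanti, ?_, ?_⟩
    · rw [ha, hw0, hN]
      ring
    · rw [hb, hwt, hN]
      ring

/-- Non-trivial constant 2-labellings of Type 2 cycles (`z x^((p-2)/2) t x^((p-2)/2)`):
either `φ` is `(p/2)`-periodic with `a = 2αx + t + z` and `b = 2(α+1)x` for some
`0 ≤ α ≤ (p-4)/2`, or `φ` is `(p/2)`-antiperiodic with `a = (p/2-1)x + z` and
`b = (p/2-1)x + t`. -/
theorem type2_constant2Labelling
    (p : ℕ) [NeZero p] (hp : 4 ≤ p) (hpe : Even p)
    (w : ZMod p → ℝ) (z x t : ℝ) (hxt : x ≠ t)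
    (hw0 : w 0 = z) (hwt : w ((p / 2 : ℕ) : ZMod p) = t)
    (hw : ∀ i : ZMod p, i ≠ 0 → i ≠ ((p / 2 : ℕ) : ZMod p) → w i = x)
    (φ : ZMod p → Bool) (hnontriv : ∃ i j : ZMod p, φ i ≠ φ j)
    (a b : ℝ)
    (hlab : ∀ k : ZMod p,
      (φ k = true → (∑ u : ZMod p, if φ (u + k) = true then w u else 0) = a) ∧
      (φ k = false → (∑ u : ZMod p, if φ (u + k) = true then w u else 0) = b)) :
    ((∀ i : ZMod p, φ (i + ((p / 2 : ℕ) : ZMod p)) = φ i) ∧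
      ∃ α : ℕ, α ≤ (p - 4) / 2 ∧
        a = 2 * (α : ℝ) * x + t + z ∧ b = 2 * ((α : ℝ) + 1) * x) ∨
    ((∀ i : ZMod p, φ (i + ((p / 2 : ℕ) : ZMod p)) ≠ φ i) ∧
      a = (((p / 2 : ℕ) : ℝ) - 1) * x + z ∧
      b = (((p / 2 : ℕ) : ℝ) - 1) * x + t) :=
  type2_constant2Labelling_general p hpe w z x t hxt hw0 hwt hw φ hnontriv a b hlab
end

section
/- If a coloring φ of a Type 3 cycle is a constant 2-labelling for some constants a and b, then φ is monochromatic; in other words, only trivial colorings of a Type 3 cycle are constant 2-labellings. -/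
/-!
Shifting the window by two changes `S_φ` only at the three positions where the weight word
`z (xy)^((p-1)/2)` fails to be 2-periodic:
`S(k+2) - S(k) = [φ k](x - z) + [φ (k+1)](y - x) + [φ (k+2)](z - y)`.
At a black-white step `k, k+1` of a constant 2-labelling, this identity at `k` and at `k - 1`
forces `b - a = x - z` and `b - a = y - z`, hence `x = y`. Swapping the colours of a constant
2-labelling gives another one, so white-black steps are excluded as well.
-/

open Finset

section BlackSum

variable {G M : Type*} [AddCommGroup G] [Fintype G] [AddCommGroup M]

/-- The paper's `S_φ(k)`, with `true` playing the role of black. -/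
def blackSum (w : G → M) (φ : G → Bool) (k : G) : M :=
  ∑ u, if φ (u + k) then w u else 0

def IsConstant2Labelling (w : G → M) (φ : G → Bool) (a b : M) : Prop :=
  ∀ k, blackSum w φ k = if φ k then a else b

lemma blackSum_not (w : G → M) (φ : G → Bool) (k : G) :
    blackSum w (fun u => !φ u) k = ∑ u, w u - blackSum w φ k := by
  rw [blackSum, blackSum, eq_sub_iff_add_eq, ← sum_add_distrib]
  refine sum_congr rfl fun u _ => ?_
  cases φ (u + k) <;> simp

lemma IsConstant2Labelling.not {w : G → M} {φ : G → Bool} {a b : M}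
    (h : IsConstant2Labelling w φ a b) :
    IsConstant2Labelling w (fun u => !φ u) (∑ u, w u - b) (∑ u, w u - a) := by
  intro k
  rw [blackSum_not, h k]
  cases hk : φ k <;> simp [hk]

lemma blackSum_add (w : G → M) (φ : G → Bool) (k t : G) :
    blackSum w φ (k + t) = ∑ u, if φ (u + k) then w (u - t) else 0 :=
  Fintype.sum_equiv (Equiv.addRight t) _ _ fun u => by
    simp only [Equiv.coe_addRight, add_sub_cancel_right, add_right_comm u t k, add_assoc]

lemma blackSum_add_eq_of_forall_notMem {w : G → M} {t : G} {s : Finset G}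
    (hw : ∀ u ∉ s, w (u - t) = w u) (φ : G → Bool) (k : G) :
    blackSum w φ (k + t) =
      blackSum w φ k + ∑ u ∈ s, if φ (u + k) then w (u - t) - w u else 0 := by
  rw [blackSum_add, blackSum, ← sub_eq_iff_eq_add', ← sum_sub_distrib]
  calc ∑ u, ((if φ (u + k) then w (u - t) else 0) - if φ (u + k) then w u else 0)
      = ∑ u, if φ (u + k) then w (u - t) - w u else 0 :=
        sum_congr rfl fun u _ => by cases φ (u + k) <;> simp
    _ = _ := (sum_subset (subset_univ s) fun u _ hu => by simp [hw u hu]).symm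

end BlackSum

lemma IsConstant2Labelling.apply_add_one {G M : Type*} [CommRing G] [Fintype G] [AddCommGroup M]
    {w : G → M} {φ : G → Bool} {a b x y z : M} (hxy : x ≠ y)
    (hstep : ∀ k, blackSum w φ (k + 2) = blackSum w φ k +
      ((if φ k then x - z else 0) + (if φ (k + 1) then y - x else 0) +
        (if φ (k + 2) then z - y else 0)))
    (h : IsConstant2Labelling w φ a b) {k : G} (hk : φ k) : φ (k + 1) := by
  by_contra hk1
  rw [Bool.not_eq_true] at hk1
  have right := hstep k
  have left := hstep (k - 1)
  rw [sub_add_cancel, show k - 1 + 2 = k + 1 by ring] at left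
  rw [h, h, hk, hk1] at right left
  cases h2 : φ (k + 2) <;> cases h0 : φ (k - 1) <;>
    simp only [h2, h0, Bool.false_eq_true, ↓reduceIte, add_zero, zero_add, left_eq_add,
      sub_add_sub_cancel, sub_add_sub_cancel'] at right left
  · exact hxy (sub_eq_zero.mp left).symm
  · exact hxy (by linear_combination (norm := module) left - right)
  · exact hxy (sub_eq_zero.mp right)
  · exact hxy (sub_eq_zero.mp right)

lemma ZMod.apply_eq_of_forall_apply_add_one {n : ℕ} {α : Type*} {f : ZMod n → α}
    (h : ∀ k, f (k + 1) = f k) (i j : ZMod n) : f i = f j := by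
  have hper : Function.Periodic f 1 := h
  calc f i = f (j + ((i - j).cast : ℤ) * 1) := by
        rw [ZMod.intCast_zmod_cast, mul_one, add_sub_cancel]
    _ = f j := hper.int_mul _ j

structure IsType3Weight {p : ℕ} {M : Type*} (w : ZMod p → M) (z x y : M) : Prop where
  apply_zero : w 0 = z
  apply_of_odd : ∀ i : ZMod p, Odd i.val → w i = x
  apply_of_even : ∀ i : ZMod p, i ≠ 0 → Even i.val → w i = y

namespace IsType3Weight

variable {p : ℕ} {M : Type*} {w : ZMod p → M} {z x y : M}

lemma apply_one (hw : IsType3Weight w z x y) (hp : 3 ≤ p) : w 1 = x :=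
  hw.apply_of_odd 1 (by rw [ZMod.val_one_eq_one_mod, Nat.mod_eq_of_lt (by omega)]; exact odd_one)

lemma apply_two (hw : IsType3Weight w z x y) (hp : 3 ≤ p) : w 2 = y := by
  have hv : (2 : ZMod p).val = 2 := ZMod.val_ofNat_of_lt (show 2 < p by omega)
  refine hw.apply_of_even 2 (fun h => ?_) (by rw [hv]; exact even_two)
  simp [h] at hv

lemma apply_neg_one [NeZero p] (hw : IsType3Weight w z x y) (hp : 3 ≤ p) (hpo : Odd p) :
    w (-1) = y := by
  have hv : (1 : ZMod p).val = 1 := by rw [ZMod.val_one_eq_one_mod, Nat.mod_eq_of_lt (by omega)]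
  have h1 : (1 : ZMod p) ≠ 0 := fun h => by simp [h] at hv
  have hv' : (-1 : ZMod p).val = p - 1 := by rw [ZMod.neg_val, if_neg h1, hv]
  refine hw.apply_of_even _ (neg_ne_zero.mpr h1) ?_
  rw [hv', Nat.even_sub' (by omega)]
  simpa using hpo

lemma apply_neg_two [NeZero p] (hw : IsType3Weight w z x y) (hp : 3 ≤ p) (hpo : Odd p) :
    w (-2) = x := by
  have hv : (2 : ZMod p).val = 2 := ZMod.val_ofNat_of_lt (show 2 < p by omega)
  have h2 : (2 : ZMod p) ≠ 0 := fun h => by simp [h] at hv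
  refine hw.apply_of_odd _ ?_
  rw [ZMod.neg_val, if_neg h2, hv, Nat.odd_sub (by omega)]
  simpa using hpo

lemma apply_sub_two [NeZero p] (hw : IsType3Weight w z x y) (hp : 3 ≤ p) {u : ZMod p}
    (h0 : u ≠ 0) (h1 : u ≠ 1) (h2 : u ≠ 2) : w (u - 2) = w u := by
  have hv1 : (1 : ZMod p).val = 1 := by rw [ZMod.val_one_eq_one_mod, Nat.mod_eq_of_lt (by omega)]
  have hv2 : (2 : ZMod p).val = 2 := ZMod.val_ofNat_of_lt (show 2 < p by omega)
  have hu0 : u.val ≠ 0 := (ZMod.val_ne_zero u).mpr h0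
  have hu1 : u.val ≠ 1 := fun h => h1 (ZMod.val_injective p (h.trans hv1.symm))
  have hu2 : u.val ≠ 2 := fun h => h2 (ZMod.val_injective p (h.trans hv2.symm))
  have hsub : (u - 2).val = u.val - 2 := by rw [ZMod.val_sub (by omega), hv2]
  rcases Nat.even_or_odd u.val with he | ho
  · have hne : u - 2 ≠ 0 := fun h => by rw [h, ZMod.val_zero] at hsub; omega
    rw [hw.apply_of_even u h0 he,
      hw.apply_of_even _ hne
        (by rw [hsub]; exact (Nat.even_sub (by omega)).mpr (iff_of_true he even_two))]
  · rw [hw.apply_of_odd u ho,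
      hw.apply_of_odd _
        (by rw [hsub]; exact (Nat.odd_sub (by omega)).mpr (iff_of_true ho even_two))]

lemma blackSum_add_two [NeZero p] [AddCommGroup M] (hw : IsType3Weight w z x y) (hp : 3 ≤ p)
    (hpo : Odd p) (φ : ZMod p → Bool) (k : ZMod p) :
    blackSum w φ (k + 2) = blackSum w φ k +
      ((if φ k then x - z else 0) + (if φ (k + 1) then y - x else 0) +
        (if φ (k + 2) then z - y else 0)) := by
  have hv1 : (1 : ZMod p).val = 1 := by rw [ZMod.val_one_eq_one_mod, Nat.mod_eq_of_lt (by omega)]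
  have hv2 : (2 : ZMod p).val = 2 := ZMod.val_ofNat_of_lt (show 2 < p by omega)
  have h01 : (0 : ZMod p) ≠ 1 := fun h => by simp [← h] at hv1
  have h02 : (0 : ZMod p) ≠ 2 := fun h => by simp [← h] at hv2
  have h12 : (1 : ZMod p) ≠ 2 := fun h => by rw [h] at hv1; omega
  rw [blackSum_add_eq_of_forall_notMem (s := {0, 1, 2}) fun u hu => by
    simp only [mem_insert, mem_singleton, not_or] at hu
    exact hw.apply_sub_two hp hu.1 hu.2.1 hu.2.2]
  rw [sum_insert (by simp [h01, h02]), sum_insert (by simp [h12]), sum_singleton]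
  simp [add_assoc, add_comm _ k, show (1 : ZMod p) - 2 = -1 by ring, hw.apply_zero, hw.apply_one hp,
    hw.apply_two hp, hw.apply_neg_one hp hpo, hw.apply_neg_two hp hpo]

end IsType3Weight

/-- On a Type 3 cycle (weight word `z (xy)^((p-1)/2)` with `x ≠ y`), every
constant 2-labelling is monochromatic. -/
theorem type3_constant2Labelling_monochromatic
    (p : ℕ) [NeZero p] (hp : 3 ≤ p) (hpo : Odd p)
    (w : ZMod p → ℝ) (z x y : ℝ) (hxy : x ≠ y)
    (hw0 : w 0 = z)
    (hwx : ∀ i : ZMod p, Odd i.val → w i = x)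
    (hwy : ∀ i : ZMod p, i ≠ 0 → Even i.val → w i = y)
    (φ : ZMod p → Bool) (a b : ℝ)
    (hlab : ∀ k : ZMod p,
      (φ k = true → (∑ u : ZMod p, if φ (u + k) = true then w u else 0) = a) ∧
      (φ k = false → (∑ u : ZMod p, if φ (u + k) = true then w u else 0) = b)) :
    ∀ i j : ZMod p, φ i = φ j := by
  have hw : IsType3Weight w z x y := ⟨hw0, hwx, hwy⟩
  have hφ : IsConstant2Labelling w φ a b := fun k => by
    cases hk : φ k
    · exact (hlab k).2 hk
    · exact (hlab k).1 hk
  have hstep := hw.blackSum_add_two hp hpo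
  refine ZMod.apply_eq_of_forall_apply_add_one fun k => ?_
  cases hk : φ k
  · simpa using hφ.not.apply_add_one hxy (hstep _) (k := k) (by simpa using hk)
  · exact hφ.apply_add_one hxy (hstep φ) hk
end

section
/- Every alternate (1-antiperiodic) coloring φ of a Type 4 cycle is a constant 2-labelling with constants a = (p/2−1)y + z and b = (p/2)x. -/
/-!
An alternating colouring of an even cycle is determined by parity: `φ (u + k) = φ k` exactly
when `u` is even. Hence for a black `k` the sum runs over the even positions (weight `z` at `0`
and `y` at the other `p/2 - 1`), and for a white `k` over the `p/2` odd positions (weight `x`).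
-/

open Finset

theorem Finset.sum_range_two_mul {M : Type*} [AddCommMonoid M] (f : ℕ → M) (q : ℕ) :
    ∑ n ∈ range (2 * q), f n = ∑ i ∈ range q, (f (2 * i) + f (2 * i + 1)) := by
  induction q with
  | zero => simp
  | succ q ih => rw [Nat.mul_succ, sum_range_succ, sum_range_succ, sum_range_succ, ih, add_assoc]

theorem ZMod.sum_eq_sum_range {M : Type*} [AddCommMonoid M] (p : ℕ) [NeZero p]
    (f : ZMod p → M) : ∑ u : ZMod p, f u = ∑ n ∈ range p, f n := by
  refine sum_nbij' ZMod.val (↑) (fun u _ ↦ mem_range.2 u.val_lt) (fun _ _ ↦ mem_univ _)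
    (fun u _ ↦ ZMod.natCast_zmod_val u) (fun n hn ↦ ZMod.val_cast_of_lt (mem_range.1 hn))
    (fun u _ ↦ by rw [ZMod.natCast_zmod_val])

theorem apply_add_natCast_of_alternating {G : Type*} [AddMonoidWithOne G] {φ : G → Bool}
    (halt : ∀ i, φ (i + 1) ≠ φ i) (k : G) (n : ℕ) :
    φ (k + n) = if Even n then φ k else !φ k := by
  induction n with
  | zero => simp
  | succ n ih =>
    rw [Nat.cast_succ, ← add_assoc, Bool.eq_not_of_ne (halt _), ih]
    by_cases h : Even n <;> simp [h, Nat.even_add_one]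

theorem ZMod.apply_add_of_alternating {p : ℕ} [NeZero p] {φ : ZMod p → Bool}
    (halt : ∀ i, φ (i + 1) ≠ φ i) (u k : ZMod p) :
    φ (u + k) = if Even u.val then φ k else !φ k := by
  simpa [add_comm] using apply_add_natCast_of_alternating halt k u.val

section ParitySums

variable {M : Type*} [AddCommMonoid M] {q : ℕ} [NeZero (2 * q)]

theorem ZMod.sum_ite_even_val (f : ZMod (2 * q) → M) :
    ∑ u : ZMod (2 * q), (if Even u.val then f u else 0) = ∑ i ∈ range q, f (2 * i : ℕ) := by
  rw [ZMod.sum_eq_sum_range, sum_range_two_mul]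
  refine sum_congr rfl fun i hi ↦ ?_
  have hi : 2 * i + 1 < 2 * q := by have := mem_range.1 hi; omega
  rw [ZMod.val_cast_of_lt hi, ZMod.val_cast_of_lt (by omega)]
  simp

theorem ZMod.sum_ite_odd_val (f : ZMod (2 * q) → M) :
    ∑ u : ZMod (2 * q), (if Odd u.val then f u else 0) = ∑ i ∈ range q, f (2 * i + 1 : ℕ) := by
  rw [ZMod.sum_eq_sum_range, sum_range_two_mul]
  refine sum_congr rfl fun i hi ↦ ?_
  have hi : 2 * i + 1 < 2 * q := by have := mem_range.1 hi; omega
  rw [ZMod.val_cast_of_lt hi, ZMod.val_cast_of_lt (by omega)]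
  simp [Nat.odd_iff]

end ParitySums

theorem type4_alternate_constant2Labelling_general
    (p : ℕ) [NeZero p] (hpe : Even p)
    (w : ZMod p → ℝ) (z x y : ℝ)
    (hw0 : w 0 = z)
    (hwx : ∀ i : ZMod p, Odd i.val → w i = x)
    (hwy : ∀ i : ZMod p, i ≠ 0 → Even i.val → w i = y)
    (φ : ZMod p → Bool) (halt : ∀ i : ZMod p, φ (i + 1) ≠ φ i) :
    ∀ k : ZMod p,
      (φ k = true → (∑ u : ZMod p, if φ (u + k) = true then w u else 0) =
        (((p / 2 : ℕ) : ℝ) - 1) * y + z) ∧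
      (φ k = false → (∑ u : ZMod p, if φ (u + k) = true then w u else 0) =
        ((p / 2 : ℕ) : ℝ) * x) := by
  obtain ⟨q, rfl⟩ := hpe.two_dvd
  obtain ⟨r, rfl⟩ : ∃ r, q = r + 1 :=
    Nat.exists_eq_add_one.2 (Nat.pos_of_mul_pos_left (NeZero.pos (2 * q)))
  have hval {n : ℕ} (hn : n < 2 * (r + 1)) : ((n : ZMod (2 * (r + 1)))).val = n :=
    ZMod.val_cast_of_lt hn
  have hsum_even : ∑ i ∈ range (r + 1), w (2 * i : ℕ) = (((r + 1 : ℕ) : ℝ) - 1) * y + z := by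
    rw [sum_range_succ', sum_congr rfl fun i hi ↦ hwy _ ?_ ?_]
    · simp [hw0]
    all_goals have hlt : 2 * (i + 1) < 2 * (r + 1) := by have := mem_range.1 hi; omega
    · rw [ne_eq, ← ZMod.val_eq_zero, hval hlt]; omega
    · rw [hval hlt]; exact even_two_mul _
  have hsum_odd : ∑ i ∈ range (r + 1), w (2 * i + 1 : ℕ) = ((r + 1 : ℕ) : ℝ) * x := by
    rw [sum_congr rfl fun i hi ↦ hwx _ ?_]
    · simp
    rw [hval (by have := mem_range.1 hi; omega)]
    exact odd_two_mul_add_one i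
  rw [Nat.mul_div_cancel_left _ two_pos]
  refine fun k ↦ ⟨fun hk ↦ ?_, fun hk ↦ ?_⟩
  · simp only [ZMod.apply_add_of_alternating halt, hk]
    simpa using (ZMod.sum_ite_even_val w).trans hsum_even
  · simp only [ZMod.apply_add_of_alternating halt, hk]
    simpa using (ZMod.sum_ite_odd_val w).trans hsum_odd

/-- Every alternate coloring of a Type 4 cycle (`z (xy)^((p-2)/2) x`) is a
constant 2-labelling with constants `a = (p/2-1)y + z` and `b = (p/2)x`. -/
theorem type4_alternate_constant2Labelling
    (p : ℕ) [NeZero p] (hp : 4 ≤ p) (hpe : Even p)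
    (w : ZMod p → ℝ) (z x y : ℝ) (hxy : x ≠ y)
    (hw0 : w 0 = z)
    (hwx : ∀ i : ZMod p, Odd i.val → w i = x)
    (hwy : ∀ i : ZMod p, i ≠ 0 → Even i.val → w i = y)
    (φ : ZMod p → Bool) (halt : ∀ i : ZMod p, φ (i + 1) ≠ φ i) :
    ∀ k : ZMod p,
      (φ k = true → (∑ u : ZMod p, if φ (u + k) = true then w u else 0) =
        (((p / 2 : ℕ) : ℝ) - 1) * y + z) ∧
      (φ k = false → (∑ u : ZMod p, if φ (u + k) = true then w u else 0) =
        ((p / 2 : ℕ) : ℝ) * x) :=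
  type4_alternate_constant2Labelling_general p hpe w z x y hw0 hwx hwy φ halt
end

section
/- Let E = {(x₁,x₂) ∈ ℤ² : x₁+x₂ is even} be the even sublattice. For every integer r ≥ 1: if r is even then E is an (r, (r+1)², r²)-code of ℤ², and if r is odd then E is an (r, r², (r+1)²)-code of ℤ². -/
/-!
The map `(x, y) ↦ (x + y, x - y)` is injective on `ℤ²` and turns the Manhattan norm into the
sup norm, since `|x| + |y| = max |x + y| |x - y|`. Recentred at `v`, it sends the even points of
the radius-`r` ball around `v` onto `A × A`, where `A` is the set of `p` with `|p| ≤ r` and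
`p + v₁ + v₂` even. So the count is `(r + 1)²` when `r + v₁ + v₂` is even and `r²` otherwise.
-/

/-- The ball of radius `r` around `v` in `ℤ²` for the Manhattan metric. -/
def manhattanBall (r : ℕ) (v : ℤ × ℤ) : Set (ℤ × ℤ) :=
  {u : ℤ × ℤ | (u.1 - v.1).natAbs + (u.2 - v.2).natAbs ≤ r}

/-- `S ⊆ ℤ²` is an `(r,a,b)`-code: every element of `S` has exactly `a` elements
of `S` in its radius-`r` ball, and every element of the complement has exactly `b`. -/
def IsRabCode (r a b : ℕ) (S : Set (ℤ × ℤ)) : Prop :=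
  (∀ v ∈ S, (S ∩ manhattanBall r v).ncard = a) ∧
  (∀ v : ℤ × ℤ, v ∉ S → (S ∩ manhattanBall r v).ncard = b)

theorem card_filter_even_add_Icc (r : ℕ) (t : ℤ) :
    ((Finset.Icc (-r : ℤ) r).filter fun p => Even (p + t)).card =
      if Even (r + t) then r + 1 else r := by
  have hinj (c : ℤ) : Function.Injective fun k : ℕ => 2 * (k : ℤ) + c :=
    fun a b h => by simpa using h
  split_ifs with h
  · have : (Finset.Icc (-r : ℤ) r).filter (fun p => Even (p + t)) =
        (Finset.range (r + 1)).image fun k : ℕ => 2 * (k : ℤ) + -r := by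
      ext p
      simp only [Finset.mem_filter, Finset.mem_Icc, Finset.mem_image, Finset.mem_range,
        Int.even_iff] at h ⊢
      constructor
      · rintro ⟨⟨hlo, hhi⟩, hp⟩
        exact ⟨((p + r) / 2).toNat, by omega, by omega⟩
      · rintro ⟨k, hk, rfl⟩
        omega
    rw [this, Finset.card_image_of_injective _ (hinj _), Finset.card_range]
  · have : (Finset.Icc (-r : ℤ) r).filter (fun p => Even (p + t)) =
        (Finset.range r).image fun k : ℕ => 2 * (k : ℤ) + (1 - r) := by
      ext p
      simp only [Finset.mem_filter, Finset.mem_Icc, Finset.mem_image, Finset.mem_range,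
        Int.even_iff] at h ⊢
      constructor
      · rintro ⟨⟨hlo, hhi⟩, hp⟩
        exact ⟨((p + r - 1) / 2).toNat, by omega, by omega⟩
      · rintro ⟨k, hk, rfl⟩
        omega
    rw [this, Finset.card_image_of_injective _ (hinj _), Finset.card_range]

def rotateAround (v u : ℤ × ℤ) : ℤ × ℤ :=
  (u.1 - v.1 + (u.2 - v.2), u.1 - v.1 - (u.2 - v.2))

theorem rotateAround_injective (v : ℤ × ℤ) : Function.Injective (rotateAround v) := by
  rintro ⟨x, y⟩ ⟨x', y'⟩ h
  simp only [rotateAround, Prod.mk.injEq] at h ⊢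
  omega

theorem image_rotateAround_evenSublattice_inter_manhattanBall (r : ℕ) (v : ℤ × ℤ) :
    rotateAround v '' ({x : ℤ × ℤ | Even (x.1 + x.2)} ∩ manhattanBall r v) =
      ↑(((Finset.Icc (-r : ℤ) r).filter fun p => Even (p + (v.1 + v.2))) ×ˢ
        ((Finset.Icc (-r : ℤ) r).filter fun p => Even (p + (v.1 + v.2)))) := by
  ext ⟨p, q⟩
  simp only [rotateAround, Set.mem_image, Set.mem_inter_iff, Set.mem_ofPred_eq, manhattanBall,
    Prod.exists, Prod.mk.injEq, Finset.coe_product, Finset.coe_filter, Set.mem_prod,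
    Finset.mem_Icc, Int.even_iff]
  constructor
  · rintro ⟨x, y, ⟨hxy, hball⟩, rfl, rfl⟩
    omega
  · rintro ⟨⟨⟨hplo, hphi⟩, hp⟩, ⟨hqlo, hqhi⟩, hq⟩
    exact ⟨v.1 + (p + q) / 2, v.2 + (p - q) / 2, ⟨by omega, by omega⟩, by omega, by omega⟩

theorem ncard_evenSublattice_inter_manhattanBall (r : ℕ) (v : ℤ × ℤ) :
    ({x : ℤ × ℤ | Even (x.1 + x.2)} ∩ manhattanBall r v).ncard =
      (if Even (r + (v.1 + v.2)) then r + 1 else r) ^ 2 := by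
  rw [← Set.ncard_image_of_injective _ (rotateAround_injective v),
    image_rotateAround_evenSublattice_inter_manhattanBall,
    Set.ncard_coe_finset, Finset.card_product, card_filter_even_add_Icc, sq]

theorem evenSublattice_code_general (r : ℕ) :
    (Even r → IsRabCode r ((r + 1) ^ 2) (r ^ 2)
        {x : ℤ × ℤ | Even (x.1 + x.2)}) ∧
    (Odd r → IsRabCode r (r ^ 2) ((r + 1) ^ 2)
        {x : ℤ × ℤ | Even (x.1 + x.2)}) := by
  simp only [IsRabCode, ncard_evenSublattice_inter_manhattanBall, Set.mem_ofPred_eq]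
  refine ⟨fun hr => ⟨fun v hv => ?_, fun v hv => ?_⟩, fun hr => ⟨fun v hv => ?_, fun v hv => ?_⟩⟩
  all_goals simp_all [Int.even_add, ← Nat.not_even_iff_odd]

/-- The even sublattice `{(x₁,x₂) : x₁ + x₂ even}` is an `(r,(r+1)²,r²)`-code
for even `r ≥ 1` and an `(r,r²,(r+1)²)`-code for odd `r ≥ 1`. -/
theorem evenSublattice_code (r : ℕ) (hr : 1 ≤ r) :
    (Even r → IsRabCode r ((r + 1) ^ 2) (r ^ 2)
        {x : ℤ × ℤ | Even (x.1 + x.2)}) ∧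
    (Odd r → IsRabCode r (r ^ 2) ((r + 1) ^ 2)
        {x : ℤ × ℤ | Even (x.1 + x.2)}) :=
  evenSublattice_code_general r
end

section
/- Let r ≥ 2 be even and let B be a nonempty subset of ZMod (r+1). Then the diagonal coloring S_B = {(x₁,x₂) ∈ ℤ² : the residue of x₁−x₂ modulo r+1 belongs to B} is an (r, a, b)-code of ℤ² with a = (r+1) + (|B|−1)(2r+1) and b = |B|(2r+1). -/
/-!
Translating the ball around `v` to the origin, a point `d` of the ball has `d + v ∈ S_B` iff
`(d₁ - d₂ mod r+1) + ρ ∈ B`, where `ρ` is the residue of `v`, so the count splits over the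
residues `c = b - ρ`, `b ∈ B`. The points of the ball on the line `d₁ - d₂ = k`, `|k| ≤ r`,
number `r + 1` for `k` even and `r` for `k` odd (as `r` is even). The residue `0` meets the
ball only on the line `k = 0`, while a residue `c ≠ 0` meets it on the two lines
`k = c` and `k = c - (r+1)` of opposite parity, giving `2r + 1` points.
-/

open Finset

theorem ZMod.intCast_eq_iff_of_natAbs_le {n : ℕ} (c : ZMod (n + 1)) {k : ℤ}
    (hk : k.natAbs ≤ n) : (k : ZMod (n + 1)) = c ↔ k = c.val ∨ k = c.val - (n + 1) := by
  have hc := ZMod.val_lt c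
  rw [← ZMod.val_injective _ |>.eq_iff, ← Int.natCast_inj, ZMod.val_intCast]
  push_cast
  rcases le_or_gt 0 k with hk0 | hk0
  · rw [Int.emod_eq_of_lt hk0 (by omega)]
    omega
  · rw [← Int.add_mul_emod_self_right k 1 (n + 1), Int.emod_eq_of_lt (by omega) (by omega)]
    omega

theorem Finset.sum_ite_eq_const {α : Type*} [DecidableEq α] (s : Finset α) (a : α) (x y : ℕ) :
    ∑ b ∈ s, (if b = a then x else y) = if a ∈ s then x + (#s - 1) * y else #s * y := by
  split_ifs with ha
  · rw [← add_sum_erase _ _ ha, if_pos rfl,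
      sum_congr rfl fun b hb => if_neg (ne_of_mem_erase hb), sum_const, card_erase_of_mem ha,
      smul_eq_mul]
  · rw [sum_congr rfl fun b hb => if_neg fun hba : b = a => ha (hba ▸ hb), sum_const,
      smul_eq_mul]

noncomputable def manhattanBallFinset (r : ℕ) : Finset (ℤ × ℤ) :=
  {d ∈ Icc (-(r : ℤ)) r ×ˢ Icc (-(r : ℤ)) r | d.1.natAbs + d.2.natAbs ≤ r}

theorem mem_manhattanBallFinset {r : ℕ} {d : ℤ × ℤ} :
    d ∈ manhattanBallFinset r ↔ d.1.natAbs + d.2.natAbs ≤ r := by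
  simp only [manhattanBallFinset, mem_filter, mem_product, mem_Icc]
  omega

theorem ncard_inter_manhattanBall (S : Set (ℤ × ℤ)) [DecidablePred (· ∈ S)] (r : ℕ)
    (v : ℤ × ℤ) :
    (S ∩ manhattanBall r v).ncard = #{d ∈ manhattanBallFinset r | d + v ∈ S} := by
  have hS : S ∩ manhattanBall r v =
      (· + v) '' ↑({d ∈ manhattanBallFinset r | d + v ∈ S}) := by
    ext u
    simp only [Set.mem_inter_iff, manhattanBall, Set.mem_ofPred_eq, Set.mem_image, coe_filter,
      mem_manhattanBallFinset]
    refine ⟨fun hu => ⟨u - v, by simpa using hu.symm, by simp⟩, ?_⟩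
    rintro ⟨d, ⟨hd, hdS⟩, rfl⟩
    simpa [and_comm] using ⟨hd, hdS⟩
  rw [hS, Set.ncard_image_of_injective _ (add_left_injective v), Set.ncard_coe_finset]

theorem card_manhattanBallFinset_filter_sub_eq {r : ℕ} {k : ℤ} (hk : k.natAbs ≤ r) :
    (#{d ∈ manhattanBallFinset r | d.1 - d.2 = k} : ℤ) = (r + k) / 2 + (r - k) / 2 + 1 := by
  have hline : {d ∈ manhattanBallFinset r | d.1 - d.2 = k} =
      (Icc (-((r - k) / 2)) ((r + k) / 2)).map
        ⟨fun x => (x, x - k), fun x y h => congrArg Prod.fst h⟩ := by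
    ext ⟨x, y⟩
    simp only [mem_filter, mem_manhattanBallFinset, mem_map, mem_Icc]
    constructor
    · rintro ⟨hxy, rfl⟩
      exact ⟨x, by omega, Prod.ext rfl (sub_sub_cancel x y)⟩
    · rintro ⟨x, hx, hxy⟩
      obtain ⟨rfl, rfl⟩ := Prod.mk.inj hxy
      omega
  rw [hline, card_map, Int.card_Icc]
  omega

theorem card_manhattanBallFinset_filter_intCast_eq {r : ℕ} (hr : Even r) (c : ZMod (r + 1)) :
    #{d ∈ manhattanBallFinset r | ((d.1 - d.2 : ℤ) : ZMod (r + 1)) = c} =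
      if c = 0 then r + 1 else 2 * r + 1 := by
  obtain ⟨m, rfl⟩ := hr
  have hlines : ∀ d ∈ manhattanBallFinset (m + m),
      ((d.1 - d.2 : ℤ) : ZMod (m + m + 1)) = c ↔
        d.1 - d.2 = c.val ∨ d.1 - d.2 = c.val - (m + m + 1 : ℕ) := fun d hd => by
    rw [mem_manhattanBallFinset] at hd
    rw [ZMod.intCast_eq_iff_of_natAbs_le c (by omega)]
    push_cast
    rfl
  split_ifs with hc
  · subst hc
    have hval : ((0 : ZMod (m + m + 1)).val : ℤ) = 0 := by simp
    rw [filter_congr fun d hd => (hlines d hd).trans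
      (show _ ↔ d.1 - d.2 = 0 by rw [mem_manhattanBallFinset] at hd; rw [hval]; omega)]
    zify
    rw [card_manhattanBallFinset_filter_sub_eq (by simp)]
    omega
  · have hc0 : 0 < c.val := Nat.pos_of_ne_zero ((ZMod.val_ne_zero c).2 hc)
    have hcr := ZMod.val_lt c
    rw [filter_congr hlines, filter_or, card_union_of_disjoint
      (disjoint_filter.2 fun d _ h₁ h₂ => by omega)]
    zify
    rw [card_manhattanBallFinset_filter_sub_eq (by omega),
      card_manhattanBallFinset_filter_sub_eq (by omega)]
    omega

open Classical in
theorem ncard_diagonal_inter_manhattanBall {r : ℕ} (hr : Even r) (B : Set (ZMod (r + 1)))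
    (v : ℤ × ℤ) :
    ({x : ℤ × ℤ | ((x.1 - x.2 : ℤ) : ZMod (r + 1)) ∈ B} ∩ manhattanBall r v).ncard =
      if ((v.1 - v.2 : ℤ) : ZMod (r + 1)) ∈ B then (r + 1) + (B.ncard - 1) * (2 * r + 1)
      else B.ncard * (2 * r + 1) := by
  set ρ : ZMod (r + 1) := ((v.1 - v.2 : ℤ) : ZMod (r + 1))
  set f : ℤ × ℤ → ZMod (r + 1) := fun d => ((d.1 - d.2 : ℤ) : ZMod (r + 1)) + ρ
  have hfiber : ∀ b ∈ B.toFinset,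
      #{d ∈ {d ∈ manhattanBallFinset r | f d ∈ B} | f d = b} =
        if b = ρ then r + 1 else 2 * r + 1 := fun b hb => by
    rw [filter_filter,
      filter_congr fun d _ => and_iff_right_of_imp fun h => h ▸ Set.mem_toFinset.1 hb]
    simp only [f, ← eq_sub_iff_add_eq]
    rw [card_manhattanBallFinset_filter_intCast_eq hr]
    simp only [sub_eq_zero]
  have hshift : ∀ d : ℤ × ℤ, (((d + v).1 - (d + v).2 : ℤ) : ZMod (r + 1)) = f d :=
      fun d => by
    simp only [f, ρ, Prod.fst_add, Prod.snd_add]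
    push_cast
    ring
  rw [ncard_inter_manhattanBall, filter_congr fun d _ => show _ ↔ f d ∈ B by
      rw [Set.mem_ofPred_eq, hshift],
    card_eq_sum_card_fiberwise fun d hd => Set.mem_toFinset.2 (mem_filter.1 hd).2,
    sum_congr rfl hfiber, sum_ite_eq_const, Set.ncard_eq_toFinset_card']
  simp only [Set.mem_toFinset]

theorem diagonal_code_even_general (r : ℕ) (hre : Even r)
    (B : Set (ZMod (r + 1))) :
    IsRabCode r ((r + 1) + (B.ncard - 1) * (2 * r + 1)) (B.ncard * (2 * r + 1))
      {x : ℤ × ℤ | ((x.1 - x.2 : ℤ) : ZMod (r + 1)) ∈ B} := by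
  constructor
  · exact fun v hv => (ncard_diagonal_inter_manhattanBall hre B v).trans (if_pos hv)
  · exact fun v hv => (ncard_diagonal_inter_manhattanBall hre B v).trans (if_neg hv)

/-- For even `r ≥ 2` and a nonempty `B ⊆ ZMod (r+1)`, the diagonal coloring
`S_B = {(x₁,x₂) : (x₁ - x₂ mod r+1) ∈ B}` is an `(r,a,b)`-code with
`a = (r+1) + (|B|-1)(2r+1)` and `b = |B|(2r+1)`. -/
theorem diagonal_code_even (r : ℕ) (hr : 2 ≤ r) (hre : Even r)
    (B : Set (ZMod (r + 1))) (hB : B.Nonempty) :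
    IsRabCode r ((r + 1) + (B.ncard - 1) * (2 * r + 1)) (B.ncard * (2 * r + 1))
      {x : ℤ × ℤ | ((x.1 - x.2 : ℤ) : ZMod (r + 1)) ∈ B} :=
  diagonal_code_even_general r hre B
end

section
/- Let r ≥ 3 be odd and let B be a nonempty subset of ZMod r. Then the diagonal coloring S_B = {(x₁,x₂) ∈ ℤ² : the residue of x₁−x₂ modulo r belongs to B} is an (r, a, b)-code of ℤ² with a = (3r+2) + (|B|−1)(2r+1) and b = |B|(2r+1). -/
open Finset

theorem card_filter_product_eq_sum {α β : Type*} (s : Finset α) (t : Finset β) (p : α → Prop)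
    [DecidablePred p] (q : α → β → Prop) [∀ a, DecidablePred (q a)] :
    #{x ∈ s ×ˢ t | p x.1 ∧ q x.1 x.2} = ∑ a ∈ s with p a, #{b ∈ t | q a b} := by
  simp only [card_filter, sum_product, sum_filter, ite_and]
  refine sum_congr rfl fun a _ => ?_
  split_ifs <;> simp

theorem sum_Icc_neg_eq_add_sum_Ico {M : Type*} [AddCommMonoid M] (f : ℤ → M) (r : ℕ) :
    ∑ k ∈ Icc (-r : ℤ) r, f k = f r + ∑ k ∈ Ico (0 : ℤ) r, (f k + f (k - r)) := by
  have hneg : ∑ k ∈ Ico (-r : ℤ) 0, f k = ∑ k ∈ Ico (0 : ℤ) r, f (k - r) := by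
    simpa [sub_eq_add_neg] using (sum_Ico_add' f (0 : ℤ) r (-r)).symm
  rw [← Ico_insert_right (by omega), sum_insert (by simp),
    ← Ico_union_Ico_eq_Ico (b := 0) (by omega) (by omega),
    sum_union (Ico_disjoint_Ico_consecutive _ _ _), hneg, sum_add_distrib,
    add_comm (∑ k ∈ _, f (k - r))]

theorem card_filter_Icc_two_dvd_add {r : ℕ} (hr : Odd r) (k : ℤ) :
    #{s ∈ Icc (-r : ℤ) r | 2 ∣ k + s} = if Even k then r else r + 1 := by
  obtain ⟨m, rfl⟩ := hr
  have himage : {s ∈ Icc (-(2 * m + 1 : ℕ) : ℤ) (2 * m + 1 : ℕ) | 2 ∣ k + s} =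
      (Icc (-m - k % 2) m).image (fun j => 2 * j + k % 2) := by
    ext s
    simp only [mem_filter, mem_Icc, mem_image]
    constructor
    · rintro ⟨hs, hdvd⟩
      exact ⟨(s - k % 2) / 2, by omega, by omega⟩
    · rintro ⟨j, hj, rfl⟩
      omega
  rw [himage, card_image_of_injective _ (fun a b h => by omega), Int.card_Icc]
  split_ifs with hk
  · rw [Int.even_iff] at hk; omega
  · rw [Int.not_even_iff] at hk; omega

open Classical in
theorem card_filter_Ico_intCast_add_mem {r : ℕ} [NeZero r] (d : ℤ) (B : Set (ZMod r)) :
    #{k ∈ Ico (0 : ℤ) r | ((d + k : ℤ) : ZMod r) ∈ B} = B.ncard := by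
  rw [← Set.ncard_coe_finset]
  refine Set.ncard_congr (fun k _ => ((d + k : ℤ) : ZMod r))
    (fun k hk => (mem_filter.1 hk).2)
    (fun k l hk hl hkl => ?_) (fun c hc => ⟨(c - d).val, ?_, ?_⟩)
  · simp only [coe_filter, mem_Ico, Set.mem_ofPred_eq] at hk hl
    rw [ZMod.intCast_eq_intCast_iff_dvd_sub] at hkl
    have := Int.eq_zero_of_abs_lt_dvd hkl (by rw [abs_lt]; omega)
    omega
  · rw [mem_coe, mem_filter, mem_Ico]
    exact ⟨⟨by positivity, by exact_mod_cast (c - d).val_lt⟩, by simpa using hc⟩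
  · simp

open Classical in
theorem ncard_inter_manhattanBall_eq_card_rotated (r : ℕ) (D : Set ℤ) (v : ℤ × ℤ) :
    ({x : ℤ × ℤ | x.1 - x.2 ∈ D} ∩ manhattanBall r v).ncard =
      #{p ∈ Icc (-r : ℤ) r ×ˢ Icc (-r : ℤ) r | v.1 - v.2 + p.1 ∈ D ∧ 2 ∣ p.1 + p.2} := by
  rw [← Set.ncard_coe_finset]
  refine Set.ncard_congr (fun u _ => ((u.1 - v.1) - (u.2 - v.2), (u.1 - v.1) + (u.2 - v.2)))
    (fun u hu => ?_) (fun u w _ _ h => ?_) (fun p hp => ?_)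
  · obtain ⟨hD, hball⟩ := hu
    simp only [manhattanBall, Set.mem_ofPred_eq] at hD hball
    simp only [coe_filter, mem_product, mem_Icc, Set.mem_ofPred_eq]
    refine ⟨by omega, by convert hD using 1; ring, by omega⟩
  · simp only [Prod.mk.injEq] at h
    ext <;> omega
  · simp only [coe_filter, mem_product, mem_Icc, Set.mem_ofPred_eq] at hp
    obtain ⟨hbox, hD, k, hk⟩ := hp
    refine ⟨(v.1 + (p.1 + p.2) / 2, v.2 + (p.2 - p.1) / 2), ⟨?_, ?_⟩, ?_⟩
    · simp only [Set.mem_ofPred_eq]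
      convert hD using 1
      omega
    · simp only [manhattanBall, Set.mem_ofPred_eq]
      omega
    · ext <;> simp only <;> omega

open Classical in
theorem ncard_diagonalColoring_inter_manhattanBall {r : ℕ} (hr : Odd r) (B : Set (ZMod r))
    (v : ℤ × ℤ) :
    ({x : ℤ × ℤ | ((x.1 - x.2 : ℤ) : ZMod r) ∈ B} ∩ manhattanBall r v).ncard =
      B.ncard * (2 * r + 1) + if ((v.1 - v.2 : ℤ) : ZMod r) ∈ B then r + 1 else 0 := by
  have : NeZero r := ⟨hr.pos.ne'⟩
  have hr' : ¬Even r := Nat.not_even_iff_odd.2 hr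
  have hpair : ∀ k : ℤ,
      #{s ∈ Icc (-r : ℤ) r | 2 ∣ k + s} + #{s ∈ Icc (-r : ℤ) r | 2 ∣ k - r + s} = 2 * r + 1 := by
    intro k
    simp only [card_filter_Icc_two_dvd_add hr, Int.even_sub, Int.even_coe_nat, hr', iff_false]
    split_ifs <;> omega
  have hperiod : ∀ k : ℤ,
      ((v.1 - v.2 + (k - r) : ℤ) : ZMod r) = ((v.1 - v.2 + k : ℤ) : ZMod r) := by
    simp
  refine (ncard_inter_manhattanBall_eq_card_rotated r (Int.cast ⁻¹' B) v).trans ?_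
  rw [card_filter_product_eq_sum _ _ (fun k => v.1 - v.2 + k ∈ Int.cast ⁻¹' B)
      fun k s => 2 ∣ k + s, sum_filter, sum_Icc_neg_eq_add_sum_Ico]
  have htop : ((v.1 - v.2 + r : ℤ) : ZMod r) = ((v.1 - v.2 : ℤ) : ZMod r) := by simp
  have hwr : #{s ∈ Icc (-r : ℤ) r | 2 ∣ (r : ℤ) + s} = r + 1 := by
    simp [card_filter_Icc_two_dvd_add hr, hr']
  simp only [Set.mem_preimage, hperiod, ← ite_add_zero, hpair, htop, hwr]
  rw [← sum_filter, sum_const, smul_eq_mul, card_filter_Ico_intCast_add_mem, add_comm]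

theorem diagonal_code_odd_general (r : ℕ) (hro : Odd r) (B : Set (ZMod r)) :
    IsRabCode r ((3 * r + 2) + (B.ncard - 1) * (2 * r + 1)) (B.ncard * (2 * r + 1))
      {x : ℤ × ℤ | ((x.1 - x.2 : ℤ) : ZMod r) ∈ B} := by
  have : NeZero r := ⟨hro.pos.ne'⟩
  refine ⟨fun v hv => ?_, fun v hv => ?_⟩ <;> rw [Set.mem_ofPred_eq] at hv
  · obtain ⟨n, hn⟩ : ∃ n, B.ncard = n + 1 :=
      Nat.exists_eq_add_one.2 ((Set.ncard_pos B.toFinite).2 ⟨_, hv⟩)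
    rw [ncard_diagonalColoring_inter_manhattanBall hro, if_pos hv, hn, Nat.add_sub_cancel]
    ring
  · rw [ncard_diagonalColoring_inter_manhattanBall hro, if_neg hv, add_zero]

/-- For odd `r ≥ 3` and a nonempty `B ⊆ ZMod r`, the diagonal coloring
`S_B = {(x₁,x₂) : (x₁ - x₂ mod r) ∈ B}` is an `(r,a,b)`-code with
`a = (3r+2) + (|B|-1)(2r+1)` and `b = |B|(2r+1)`. -/
theorem diagonal_code_odd (r : ℕ) (hr : 3 ≤ r) (hro : Odd r)
    (B : Set (ZMod r)) (hB : B.Nonempty) :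
    IsRabCode r ((3 * r + 2) + (B.ncard - 1) * (2 * r + 1)) (B.ncard * (2 * r + 1))
      {x : ℤ × ℤ | ((x.1 - x.2 : ℤ) : ZMod r) ∈ B} :=
  diagonal_code_odd_general r hro B
end
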